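/- Each of the topologies Z^T, Z and Z^S on Minkowski space is strictly finer than the Euclidean topology T_E and strictly coarser than the discrete topology: T_E < Z^T < ⊥(discrete), T_E < Z < discrete, and T_E < Z^S < discrete, where all inequalities are strict. -/
import Mathlib


noncomputable section

open TopologicalSpace Filter

/-- Minkowski space `M = ℝ × ℝ³`. -/
abbrev Mink : Type := ℝ × EuclideanSpace ℝ (Fin 3)

/-- The Euclidean (product) topology on `M`. -/
def TE : TopologicalSpace Mink := inferInstance

/-- Time difference Δt(x,y). -/
def dtime (x y : Mink) : ℝ := y.1 - x.1

/-- Spatial distance Δr(x,y). -/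
def dspace (x y : Mink) : ℝ := ‖y.2 - x.2‖

/-- Chronological order `x ≪ y`. -/
def Chron (x y : Mink) : Prop := dspace x y < dtime x y

/-- Causal order `x ≺ y`. -/
def Causal (x y : Mink) : Prop := dspace x y ≤ dtime x y

/-- Euclidean open ball of radius ε about x. -/
def eball (x : Mink) (ε : ℝ) : Set Mink :=
  {y | Real.sqrt ((y.1 - x.1) ^ 2 + ‖y.2 - x.2‖ ^ 2) < ε}

/-- Time cone `C^T(x)`. -/
def timeCone (x : Mink) : Set Mink := {x} ∪ {y | Chron x y ∨ Chron y x}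

/-- Space cone `C^S(x)`. -/
def spaceCone (x : Mink) : Set Mink := {x} ∪ {y | |dtime x y| < dspace x y}

/-- Light cone `C^L(x)`. -/
def lightCone (x : Mink) : Set Mink := {y | y ≠ x ∧ |dtime x y| = dspace x y}

/-- Causal cone `C^J(x)`. -/
def causalCone (x : Mink) : Set Mink := {x} ∪ {y | Causal x y ∨ Causal y x}

/-- Closed space cone `K^S(x)` (space cone together with the light cone). -/
def closedSpaceCone (x : Mink) : Set Mink := {x} ∪ {y | |dtime x y| ≤ dspace x y}

/-- Bounded time cones, the defining family of `Z^T`. -/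
def BasisT : Set (Set Mink) := {S | ∃ x ε, 0 < ε ∧ S = timeCone x ∩ eball x ε}

/-- Bounded space cones, the defining family of `Z^S`. -/
def BasisS : Set (Set Mink) := {S | ∃ x ε, 0 < ε ∧ S = spaceCone x ∩ eball x ε}

/-- Balls with the light cone of the centre removed, the defining family of `Z`. -/
def BasisZ : Set (Set Mink) := {S | ∃ x ε, 0 < ε ∧ S = eball x ε \ lightCone x}

/-- Zeeman's topology `Z^T` (the Minkowski analogue of the path topology). -/
def ZT : TopologicalSpace Mink := TopologicalSpace.generateFrom BasisT

/-- The topology `Z^S`. -/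
def ZS : TopologicalSpace Mink := TopologicalSpace.generateFrom BasisS

/-- The topology `Z`. -/
def Ztop : TopologicalSpace Mink := TopologicalSpace.generateFrom BasisZ

def Jplus (x : Mink) : Set Mink := {y | Causal x y}
def Jminus (x : Mink) : Set Mink := {y | Causal y x}
def Nplus (x : Mink) : Set Mink := {y | y ≠ x ∧ dtime x y = dspace x y}
def Nminus (x : Mink) : Set Mink := {y | y ≠ x ∧ -dtime x y = dspace x y}

/-- The interval topology `T^tc` whose subbasic open sets are time cones. -/
def Ttc : TopologicalSpace Mink :=
  TopologicalSpace.generateFrom {S | ∃ x, S = timeCone x}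

/-- The interval topology `T^≪` of the irreflexive causal order. -/
def Tll : TopologicalSpace Mink :=
  TopologicalSpace.generateFrom
    ({S | ∃ x, S = Set.univ \ (Jplus x \ {x})} ∪ {S | ∃ x, S = Set.univ \ (Jminus x \ {x})})

/-- The interval topology `T^→` of irreflexive horismos. -/
def Thor : TopologicalSpace Mink :=
  TopologicalSpace.generateFrom
    ({S | ∃ x, S = Set.univ \ Nplus x} ∪ {S | ∃ x, S = Set.univ \ Nminus x})

/-- The topology `(Z^T)′` generated by bounded causal cones. -/
def ZT' : TopologicalSpace Mink :=
  TopologicalSpace.generateFrom {S | ∃ x ε, 0 < ε ∧ S = causalCone x ∩ eball x ε}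

/-- The topology `(Z^S)′` generated by bounded closed space cones. -/
def ZS' : TopologicalSpace Mink :=
  TopologicalSpace.generateFrom {S | ∃ x ε, 0 < ε ∧ S = closedSpaceCone x ∩ eball x ε}

/-- The topology `(T^tc)′` generated by causal cones. -/
def Ttc' : TopologicalSpace Mink :=
  TopologicalSpace.generateFrom {S | ∃ x, S = causalCone x}

/-- The topology `(T^≪)′` generated by closed space cones. -/
def Tll' : TopologicalSpace Mink :=
  TopologicalSpace.generateFrom {S | ∃ x, S = closedSpaceCone x}

/-- An endless causal curve. -/
def EndlessCausalCurve (γ : ℝ → Mink) : Prop :=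
  Continuous γ ∧ (∀ s t : ℝ, s < t → Causal (γ s) (γ t) ∧ γ s ≠ γ t) ∧
    (∀ c : ℝ, ∃ t, c < (γ t).1) ∧ (∀ c : ℝ, ∃ t, (γ t).1 < c)

/-- `γ` is a `T`-limit curve of the sequence `γs` of curves. -/
def IsLimitCurve (T : TopologicalSpace Mink) (γ : ℝ → Mink) (γs : ℕ → ℝ → Mink) : Prop :=
  ∃ nk : ℕ → ℕ, StrictMono nk ∧
    ∀ p ∈ Set.range γ, ∃ pk : ℕ → Mink,
      (∀ k, pk k ∈ Set.range (γs (nk k))) ∧ Filter.Tendsto pk Filter.atTop (@nhds Mink T p)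

lemma eball_isOpen (x : Mink) (ε : ℝ) : IsOpen (eball x ε) := by
  have : eball x ε =
      (fun y : Mink => Real.sqrt ((y.1 - x.1) ^ 2 + ‖y.2 - x.2‖ ^ 2)) ⁻¹' Set.Iio ε := rfl
  rw [this]
  exact isOpen_Iio.preimage (by fun_prop)

lemma mem_eball_self {ε : ℝ} (hε : 0 < ε) (x : Mink) : x ∈ eball x ε := by
  simp [eball, hε]

lemma eball_subset_ball (x : Mink) (ε : ℝ) : eball x ε ⊆ Metric.ball x ε := by
  intro y hy
  have h1 : |y.1 - x.1| ≤ Real.sqrt ((y.1 - x.1) ^ 2 + ‖y.2 - x.2‖ ^ 2) :=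
    Real.abs_le_sqrt (le_add_of_nonneg_right (sq_nonneg _))
  have h2 : ‖y.2 - x.2‖ ≤ Real.sqrt ((y.1 - x.1) ^ 2 + ‖y.2 - x.2‖ ^ 2) := by
    have : |‖y.2 - x.2‖| ≤ Real.sqrt ((y.1 - x.1) ^ 2 + ‖y.2 - x.2‖ ^ 2) :=
      Real.abs_le_sqrt (le_add_of_nonneg_left (sq_nonneg (y.1 - x.1)))
    rwa [abs_of_nonneg (norm_nonneg _)] at this
  rw [Metric.mem_ball, Prod.dist_eq]
  exact max_lt (lt_of_le_of_lt (by rw [Real.dist_eq]; exact h1) hy)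
    (lt_of_le_of_lt (by rw [dist_eq_norm]; exact h2) hy)

lemma generateFrom_le_TE {B : Set (Set Mink)}
    (h : ∀ x : Mink, ∀ ε, 0 < ε → ∃ S ∈ B, x ∈ S ∧ S ⊆ eball x ε) :
    TopologicalSpace.generateFrom B ≤ TE := by
  rw [TopologicalSpace.le_def]
  intro U hU
  have key : ∀ x ∈ U, ∃ S ∈ B, x ∈ S ∧ S ⊆ U := by
    intro x hx
    obtain ⟨ε, hε, hball⟩ := Metric.isOpen_iff.mp hU x hx
    obtain ⟨S, hSB, hxS, hSsub⟩ := h x ε hε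
    exact ⟨S, hSB, hxS, hSsub.trans ((eball_subset_ball x ε).trans hball)⟩
  have : U = ⋃₀ {S | S ∈ B ∧ S ⊆ U} := by
    apply Set.Subset.antisymm
    · intro x hx
      obtain ⟨S, hSB, hxS, hSsub⟩ := key x hx
      exact ⟨S, ⟨hSB, hSsub⟩, hxS⟩
    · intro x ⟨S, ⟨_, hSU⟩, hxS⟩; exact hSU hxS
  rw [this]
  exact TopologicalSpace.GenerateOpen.sUnion _ fun S hS =>
    TopologicalSpace.GenerateOpen.basic S hS.1

lemma not_isOpen_singleton_zero : ¬ IsOpen ({0} : Set ℝ) := by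
  intro h
  obtain ⟨ε, hε, hball⟩ := Metric.isOpen_iff.mp h 0 rfl
  have : (ε/2 : ℝ) ∈ Metric.ball (0:ℝ) ε := by
    rw [Metric.mem_ball, Real.dist_eq, sub_zero, abs_of_pos (half_pos hε)]
    linarith
  have := hball this
  simp at this
  linarith

lemma ne_bot_of_curve {B : Set (Set Mink)} (c : ℝ → Mink) (hc : Function.Injective c)
    (h : ∀ S ∈ B, IsOpen (c ⁻¹' S)) : TopologicalSpace.generateFrom B ≠ ⊥ := by
  intro hbot
  have hle : TopologicalSpace.coinduced c inferInstance ≤ TopologicalSpace.generateFrom B :=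
    le_generateFrom (fun S hS => by rw [isOpen_coinduced]; exact h S hS)
  have hopen : @IsOpen Mink (TopologicalSpace.generateFrom B) {c 0} := by
    rw [hbot]; trivial
  have : IsOpen (c ⁻¹' {c 0}) := by
    rw [← isOpen_coinduced]
    exact TopologicalSpace.le_def.mp hle _ hopen
  have heq : c ⁻¹' {c 0} = {0} := by
    ext t; simp [hc.eq_iff]
  rw [heq] at this
  exact not_isOpen_singleton_zero this

lemma not_isOpen_of (S : Set Mink) (h0 : (0:Mink) ∈ S)
    (h : ∀ δ, 0 < δ → ∃ p : Mink, dist p 0 < δ ∧ p ∉ S) : ¬ IsOpen S := by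
  intro hS
  obtain ⟨δ, hδ, hball⟩ := Metric.isOpen_iff.mp hS 0 h0
  obtain ⟨p, hp1, hp2⟩ := h δ hδ
  exact hp2 (hball hp1)

def ee : EuclideanSpace ℝ (Fin 3) := EuclideanSpace.single 0 1

lemma norm_ee : ‖ee‖ = 1 := by simp [ee, EuclideanSpace.norm_single]

lemma norm_smul_ee (a : ℝ) : ‖a • ee‖ = |a| := by
  rw [norm_smul, norm_ee, mul_one, Real.norm_eq_abs]

lemma ee_ne_zero : ee ≠ 0 := by
  intro h
  have := norm_ee
  rw [h] at this; simp at this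

-- self membership
lemma mem_timeCone_self (x : Mink) : x ∈ timeCone x := Or.inl rfl
lemma mem_spaceCone_self (x : Mink) : x ∈ spaceCone x := Or.inl rfl
lemma not_mem_lightCone_self (x : Mink) : x ∉ lightCone x := fun h => h.1 rfl

-- fineness
lemma ZT_le_TE : ZT ≤ TE :=
  generateFrom_le_TE fun x ε hε =>
    ⟨timeCone x ∩ eball x ε, ⟨x, ε, hε, rfl⟩,
      ⟨mem_timeCone_self x, mem_eball_self hε x⟩, Set.inter_subset_right⟩

lemma ZS_le_TE : ZS ≤ TE :=
  generateFrom_le_TE fun x ε hε =>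
    ⟨spaceCone x ∩ eball x ε, ⟨x, ε, hε, rfl⟩,
      ⟨mem_spaceCone_self x, mem_eball_self hε x⟩, Set.inter_subset_right⟩

lemma Z_le_TE : Ztop ≤ TE :=
  generateFrom_le_TE fun x ε hε =>
    ⟨eball x ε \ lightCone x, ⟨x, ε, hε, rfl⟩,
      ⟨mem_eball_self hε x, not_mem_lightCone_self x⟩, Set.diff_subset⟩

-- curves
def cT : ℝ → Mink := fun t => (t, 0)
def cS : ℝ → Mink := fun u => (0, u • ee)

lemma cT_injective : Function.Injective cT := fun a b h => congrArg Prod.fst h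

lemma cS_injective : Function.Injective cS := by
  intro a b h
  have h2 : a • ee = b • ee := congrArg Prod.snd h
  have : (a - b) • ee = 0 := by rw [sub_smul, h2, sub_self]
  rcases smul_eq_zero.mp this with h | h
  · linarith [sub_eq_zero.mp (by exact_mod_cast h)]
  · exact absurd h ee_ne_zero

lemma cT_continuous : Continuous cT := by unfold cT; fun_prop
lemma cS_continuous : Continuous cS := by
  unfold cS; fun_prop

lemma cT_preimage_timeCone (x : Mink) : IsOpen (cT ⁻¹' timeCone x) := by
  by_cases hx2 : x.2 = 0
  · have : cT ⁻¹' timeCone x = Set.univ := by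
      ext t
      simp only [Set.mem_preimage, Set.mem_univ, iff_true]
      rcases lt_trichotomy t x.1 with h | h | h
      · exact Or.inr (Or.inr (by simp [Chron, dspace, dtime, cT, hx2]; linarith))
      · exact Or.inl (by simp [cT, Prod.ext_iff, h, hx2])
      · exact Or.inr (Or.inl (by simp [Chron, dspace, dtime, cT, hx2]; linarith))
    rw [this]; exact isOpen_univ
  · have : cT ⁻¹' timeCone x = {t | ‖x.2‖ < t - x.1} ∪ {t | ‖x.2‖ < x.1 - t} := by
      ext t
      simp only [Set.mem_preimage, timeCone, Set.mem_union, Set.mem_singleton_iff,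
        Set.mem_setOf_eq, Chron, dspace, dtime, cT]
      constructor
      · rintro (h | h | h)
        · exact absurd (congrArg Prod.snd h.symm) hx2
        · left; simpa using h
        · right; simpa using h
      · rintro (h | h)
        · exact Or.inr (Or.inl (by simpa using h))
        · exact Or.inr (Or.inr (by simpa using h))
    rw [this]
    exact (isOpen_lt continuous_const (by fun_prop)).union
      (isOpen_lt continuous_const (by fun_prop))

lemma cT_preimage_lightCone_compl (x : Mink) : IsOpen (cT ⁻¹' (lightCone x)ᶜ) := by
  by_cases hx2 : x.2 = 0
  · have : cT ⁻¹' (lightCone x)ᶜ = Set.univ := by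
      ext t
      simp only [Set.mem_preimage, Set.mem_compl_iff, Set.mem_univ, iff_true,
        lightCone, Set.mem_setOf_eq, not_and]
      intro hne
      intro habs
      apply hne
      have : |t - x.1| = 0 := by simpa [dtime, dspace, cT, hx2] using habs
      have ht : t = x.1 := by have := abs_eq_zero.mp this; linarith
      simp [cT, Prod.ext_iff, ht, hx2]
    rw [this]; exact isOpen_univ
  · have : cT ⁻¹' (lightCone x)ᶜ = {t | |t - x.1| ≠ ‖x.2‖} := by
      ext t
      simp only [Set.mem_preimage, Set.mem_compl_iff, lightCone, Set.mem_setOf_eq, not_and]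
      constructor
      · intro h habs
        apply h
        · intro heq; exact hx2 (congrArg Prod.snd heq).symm
        · simpa [dtime, dspace, cT] using habs
      · intro h _ habs
        exact h (by simpa [dtime, dspace, cT] using habs)
    rw [this]
    exact isOpen_ne_fun (by fun_prop) continuous_const

lemma cS_preimage_spaceCone (x : Mink) : IsOpen (cS ⁻¹' spaceCone x) := by
  by_cases hx1 : x.1 = 0
  · have : cS ⁻¹' spaceCone x = Set.univ := by
      ext u
      simp only [Set.mem_preimage, Set.mem_univ, iff_true]
      by_cases h : u • ee = x.2
      · exact Or.inl (by simp [cS, Prod.ext_iff, h, hx1])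
      · refine Or.inr ?_
        simp only [Set.mem_setOf_eq, dtime, dspace, cS, hx1]
        simpa using norm_pos_iff.mpr (sub_ne_zero.mpr h)
    rw [this]; exact isOpen_univ
  · have : cS ⁻¹' spaceCone x = {u | |x.1| < ‖u • ee - x.2‖} := by
      ext u
      simp only [Set.mem_preimage, spaceCone, Set.mem_union, Set.mem_singleton_iff,
        Set.mem_setOf_eq, dtime, dspace, cS]
      constructor
      · rintro (h | h)
        · exact absurd (congrArg Prod.fst h.symm) hx1
        · simpa using h
      · intro h
        exact Or.inr (by simpa using h)
    rw [this]
    exact isOpen_lt continuous_const (by fun_prop)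

lemma ZT_ne_bot : ZT ≠ ⊥ := by
  apply ne_bot_of_curve cT cT_injective
  rintro S ⟨x, ε, hε, rfl⟩
  rw [Set.preimage_inter]
  exact (cT_preimage_timeCone x).inter ((eball_isOpen x ε).preimage cT_continuous)

lemma Z_ne_bot : Ztop ≠ ⊥ := by
  apply ne_bot_of_curve cT cT_injective
  rintro S ⟨x, ε, hε, rfl⟩
  rw [Set.diff_eq, Set.preimage_inter]
  exact ((eball_isOpen x ε).preimage cT_continuous).inter (cT_preimage_lightCone_compl x)

lemma ZS_ne_bot : ZS ≠ ⊥ := by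
  apply ne_bot_of_curve cS cS_injective
  rintro S ⟨x, ε, hε, rfl⟩
  rw [Set.preimage_inter]
  exact (cS_preimage_spaceCone x).inter ((eball_isOpen x ε).preimage cS_continuous)

lemma witT_not_open : ¬ IsOpen (timeCone 0 ∩ eball 0 1) := by
  apply not_isOpen_of
  · exact ⟨mem_timeCone_self 0, mem_eball_self one_pos 0⟩
  · intro δ hδ
    refine ⟨(0, (δ/2) • ee), ?_, ?_⟩
    · rw [Prod.dist_eq]
      have : dist ((δ/2) • ee) (0 : Mink).2 = δ/2 := by
        show dist ((δ/2) • ee) (0 : EuclideanSpace ℝ (Fin 3)) = δ/2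
        rw [dist_zero_right, norm_smul_ee, abs_of_pos (half_pos hδ)]
      simp only [this]
      simp [half_lt_self hδ, hδ]
    · rintro ⟨hT, -⟩
      rcases hT with h | h | h
      · have h2 : (δ/2) • ee = (0 : EuclideanSpace ℝ (Fin 3)) := congrArg Prod.snd h
        have := norm_smul_ee (δ/2)
        rw [h2] at this
        simp [abs_of_pos (half_pos hδ)] at this
        linarith
      · simp only [Chron, dspace, dtime, Set.mem_setOf_eq] at h
        have : ‖(δ/2) • ee - (0:Mink).2‖ = δ/2 := by
          simp [norm_smul_ee, abs_of_pos (half_pos hδ)]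
        rw [this] at h
        simp at h
        linarith
      · simp only [Chron, dspace, dtime, Set.mem_setOf_eq] at h
        have : ‖(0:Mink).2 - (δ/2) • ee‖ = δ/2 := by
          simp [norm_smul_ee, abs_of_pos (half_pos hδ)]
        rw [this] at h
        simp at h
        linarith

lemma witZ_not_open : ¬ IsOpen (eball 0 1 \ lightCone 0) := by
  apply not_isOpen_of
  · exact ⟨mem_eball_self one_pos 0, not_mem_lightCone_self 0⟩
  · intro δ hδ
    refine ⟨(δ/2, (δ/2) • ee), ?_, ?_⟩
    · rw [Prod.dist_eq]
      have h1 : dist (δ/2) (0:Mink).1 = δ/2 := by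
        simp only [Real.dist_eq]
        show |δ/2 - (0:ℝ)| = δ/2
        rw [sub_zero, abs_of_pos (half_pos hδ)]
      have h2 : dist ((δ/2) • ee) (0 : Mink).2 = δ/2 := by
        show dist ((δ/2) • ee) (0 : EuclideanSpace ℝ (Fin 3)) = δ/2
        rw [dist_zero_right, norm_smul_ee, abs_of_pos (half_pos hδ)]
      rw [h1, h2]
      simpa using half_lt_self hδ
    · rintro ⟨-, hL⟩
      apply hL
      constructor
      · intro h
        have : (δ/2 : ℝ) = 0 := congrArg Prod.fst h
        linarith
      · simp [dtime, dspace, norm_smul_ee, abs_of_pos (half_pos hδ)]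

lemma witS_not_open : ¬ IsOpen (spaceCone 0 ∩ eball 0 1) := by
  apply not_isOpen_of
  · exact ⟨mem_spaceCone_self 0, mem_eball_self one_pos 0⟩
  · intro δ hδ
    refine ⟨(δ/2, 0), ?_, ?_⟩
    · rw [Prod.dist_eq]
      have h1 : dist (δ/2) (0:Mink).1 = δ/2 := by
        simp only [Real.dist_eq]
        show |δ/2 - (0:ℝ)| = δ/2
        rw [sub_zero, abs_of_pos (half_pos hδ)]
      rw [h1]
      simp [half_lt_self hδ, hδ]
    · rintro ⟨hS, -⟩
      rcases hS with h | h
      · have : (δ/2 : ℝ) = 0 := congrArg Prod.fst h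
        linarith
      · simp only [Set.mem_setOf_eq, dtime, dspace] at h
        have h1 : |(δ/2 : ℝ) - (0:Mink).1| = δ/2 := by
          simp [abs_of_pos (half_pos hδ)]
        have h2 : ‖((0 : EuclideanSpace ℝ (Fin 3))) - (0:Mink).2‖ = 0 := by simp
        rw [h1, h2] at h
        linarith

lemma ZT_ne_TE : ZT ≠ TE := by
  intro h
  apply witT_not_open
  have : @IsOpen Mink ZT (timeCone 0 ∩ eball 0 1) :=
    TopologicalSpace.GenerateOpen.basic _ ⟨0, 1, one_pos, rfl⟩
  rwa [h] at this

lemma Z_ne_TE : Ztop ≠ TE := by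
  intro h
  apply witZ_not_open
  have : @IsOpen Mink Ztop (eball 0 1 \ lightCone 0) :=
    TopologicalSpace.GenerateOpen.basic _ ⟨0, 1, one_pos, rfl⟩
  rwa [h] at this

lemma ZS_ne_TE : ZS ≠ TE := by
  intro h
  apply witS_not_open
  have : @IsOpen Mink ZS (spaceCone 0 ∩ eball 0 1) :=
    TopologicalSpace.GenerateOpen.basic _ ⟨0, 1, one_pos, rfl⟩
  rwa [h] at this


/-- Each of `Z^T`, `Z`, `Z^S` is strictly finer than the Euclidean topology and strictly
coarser than the discrete topology.  (In Mathlib's order on topologies, finer means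
smaller and the discrete topology is `⊥`.) -/
theorem ZT_Z_ZS_between_euclidean_and_discrete :
    ((⊥ : TopologicalSpace Mink) < ZT ∧ ZT < TE) ∧
    ((⊥ : TopologicalSpace Mink) < Ztop ∧ Ztop < TE) ∧
    ((⊥ : TopologicalSpace Mink) < ZS ∧ ZS < TE) := by
  exact ⟨⟨bot_lt_iff_ne_bot.mpr ZT_ne_bot, lt_of_le_of_ne ZT_le_TE ZT_ne_TE⟩,
   ⟨bot_lt_iff_ne_bot.mpr Z_ne_bot, lt_of_le_of_ne Z_le_TE Z_ne_TE⟩,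
   ⟨bot_lt_iff_ne_bot.mpr ZS_ne_bot, lt_of_le_of_ne ZS_le_TE ZS_ne_TE⟩⟩
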